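/- (Non-prefix paths avoid the footprint.) Let π, π' be access paths with π' not a prefix of π, and suppose π is acyclic and disconnected in state (s, h), and the address of π' is defined. Then the address of π' in (s,h) does not belong to the domain of the footprint of π. -/

import Mathlib

/-- Variables. -/
abbrev Var := ℕ
/-- Fld names. -/
abbrev Fld := ℕ
/-- Object locations. -/
abbrev Loc := ℕ
/-- Addresses in the field-splitting style. -/
abbrev Addr := Loc × Fld
/-- Stacks (stores). -/
abbrev Stack := Var → Loc
/-- Partial heaps. -/
abbrev Heap := Addr → Option Loc

/-- Follow a list of fields starting from a given address. -/
def lvalAux (h : Heap) : Addr → List Fld → Option Addr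
  | a, [] => some a
  | a, f :: fs => (h a).bind fun ℓ => lvalAux h (ℓ, f) fs

/-- The address `⟨x.fs⟩_{s,h}` of the access path `x.fs`
    (`none` if undefined, and paths must have a nonempty field list). -/
def lval (s : Stack) (h : Heap) (x : Var) : List Fld → Option Addr
  | [] => none
  | f :: fs => lvalAux h (s x, f) fs

/-- Domain of a partial map. -/
def pdom {β : Type} (m : Addr → Option β) : Set Addr := {a | (m a).isSome}

/-- Domain of a heap. -/
def hdom (h : Heap) : Set Addr := {a | (h a).isSome}

/-- The locations underlying a set of addresses. -/
def locs (A : Set Addr) : Set Loc := Prod.fst '' A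

/-- The set of addresses of all (nonempty) prefixes of the path `x.fs`:
    the domain of its footprint. -/
def footDom (s : Stack) (h : Heap) (x : Var) (fs : List Fld) : Set Addr :=
  {a | ∃ gs : List Fld, gs ≠ [] ∧ gs <+: fs ∧ lval s h x gs = some a}

open Classical in
/-- The footprint `h⟨s, x.fs⟩` of the path `x.fs`: the partial map defined exactly
    on the addresses of prefixes of the path, mapping `⟨π'⟩` to `h ⟨π'⟩`. -/
noncomputable def footprint (s : Stack) (h : Heap) (x : Var) (fs : List Fld) :
    Addr → Option (Option Loc) :=
  fun a => if a ∈ footDom s h x fs then some (h a) else none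

/-- Acyclicity of the path `x.fs` in state `(s, h)`. -/
def Acyclic (s : Stack) (h : Heap) (x : Var) (fs : List Fld) : Prop :=
  (lval s h x fs).isSome ∧
  ∀ (gs' gs : List Fld) (a a' : Addr), gs' ≠ [] → gs' <+: gs → gs <+: fs →
    lval s h x gs = some a → lval s h x gs' = some a' → h a ≠ some a'.1

/-- Disconnectedness of the path `x.fs` in state `(s, h)`. -/
def Disconnected (s : Stack) (h : Heap) (x : Var) (fs : List Fld) : Prop :=
  (lval s h x fs).isSome ∧
  (∀ y, y ≠ x → s y ∉ locs (footDom s h x fs)) ∧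
  (∀ a ℓ, h a = some ℓ → ℓ ∈ locs (footDom s h x fs) → a ∈ footDom s h x fs)

/-- The path `x.fs` is preserved from `(s, h)` to `(s', h')`. -/
def Preserved (x : Var) (fs : List Fld) (s : Stack) (h : Heap)
    (s' : Stack) (h' : Heap) : Prop :=
  Disconnected s h x fs ∧ Acyclic s h x fs ∧
  Disconnected s' h' x fs ∧ Acyclic s' h' x fs ∧
  s x = s' x ∧
  footDom s h x fs = footDom s' h' x fs ∧
  (∀ a ∈ footDom s h x fs, lval s h x fs ≠ some a → h a = h' a)

/-- Well-behavedness of a state. -/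
def WellBehaved (s : Stack) (h : Heap) : Prop :=
  (∀ y, s y ∈ locs (hdom h)) ∧ (∀ a ℓ, h a = some ℓ → ℓ ∈ locs (hdom h))
lemma lvalAux_append (h : Heap) (a : Addr) (l : List Fld) (f : Fld) :
    lvalAux h a (l ++ [f]) = (lvalAux h a l).bind fun b => (h b).map fun ℓ => (ℓ, f) := by
  induction l generalizing a with
  | nil => cases hh : h a <;> simp [lvalAux, hh, Option.map_eq_bind]
  | cons g l ih =>
    show (h a).bind _ = ((h a).bind _).bind _
    cases hh : h a with
    | none => simp
    | some ℓ => simp [ih]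

lemma lval_snoc (s : Stack) (h : Heap) (x : Var) {p : List Fld} (hp : p ≠ []) (f : Fld) :
    lval s h x (p ++ [f]) = (lval s h x p).bind fun b => (h b).map fun ℓ => (ℓ, f) := by
  obtain ⟨g, t, rfl⟩ := List.exists_cons_of_ne_nil hp
  exact lvalAux_append h _ t f

lemma lval_last_snd (s : Stack) (h : Heap) (x : Var) (p : List Fld) (f : Fld) (a : Addr)
    (hlv : lval s h x (p ++ [f]) = some a) : a.2 = f := by
  rcases eq_or_ne p [] with rfl | hp
  · have : some (s x, f) = some a := hlv
    cases this; rfl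
  · rw [lval_snoc s h x hp] at hlv
    obtain ⟨b, _, hmap⟩ := Option.bind_eq_some_iff.mp hlv
    obtain ⟨ℓ, _, heq⟩ := Option.map_eq_some_iff.mp hmap
    cases heq; rfl

/-- An acyclic path never points back to the root location. -/
lemma no_return (s : Stack) (h : Heap) (x : Var) (fs : List Fld)
    (hac : Acyclic s h x fs) {p : List Fld} {b : Addr} (hp : p ≠ []) (hpfs : p <+: fs)
    (hb : lval s h x p = some b) : h b ≠ some (s x) := by
  obtain ⟨g, t, rfl⟩ := List.exists_cons_of_ne_nil hp
  exact hac.2 [g] (g :: t) b (s x, g) (by simp) ⟨t, rfl⟩ hpfs hb rfl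

lemma acyclic_pred_inj_le (s : Stack) (h : Heap) (x : Var) (fs : List Fld)
    (hac : Acyclic s h x fs) {p q : List Fld} {b c : Addr} {ℓ : Loc}
    (hp : p ≠ []) (hpfs : p <+: fs) (hqfs : q <+: fs)
    (hb : lval s h x p = some b) (hc : lval s h x q = some c)
    (hhb : h b = some ℓ) (hhc : h c = some ℓ)
    (hle : p.length ≤ q.length) : p = q := by
  rcases hle.lt_or_eq with hlt | heq
  · exfalso
    have hpq : p <+: q := List.prefix_of_prefix_length_le hpfs hqfs hlt.le
    obtain ⟨r, rfl⟩ := hpq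
    have hr : r ≠ [] := by rintro rfl; simp at hlt
    obtain ⟨f, r', rfl⟩ := List.exists_cons_of_ne_nil hr
    have h1 : lval s h x (p ++ [f]) = some (ℓ, f) := by
      rw [lval_snoc s h x hp f, hb]; simp [hhb]
    have h2 : p ++ [f] <+: p ++ f :: r' := ⟨r', by simp⟩
    exact hac.2 (p ++ [f]) (p ++ f :: r') c (ℓ, f) (by simp) h2 hqfs hc h1 hhc
  · exact List.prefix_of_prefix_length_le hpfs hqfs heq.le |>.eq_of_length heq

/-- Two nonempty prefixes of an acyclic path whose addresses map to the same
location must coincide. -/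
lemma acyclic_pred_inj (s : Stack) (h : Heap) (x : Var) (fs : List Fld)
    (hac : Acyclic s h x fs) {p q : List Fld} {b c : Addr} {ℓ : Loc}
    (hp : p ≠ []) (hq : q ≠ []) (hpfs : p <+: fs) (hqfs : q <+: fs)
    (hb : lval s h x p = some b) (hc : lval s h x q = some c)
    (hhb : h b = some ℓ) (hhc : h c = some ℓ) : p = q := by
  rcases le_total p.length q.length with hle | hle
  · exact acyclic_pred_inj_le s h x fs hac hp hpfs hqfs hb hc hhb hhc hle
  · exact (acyclic_pred_inj_le s h x fs hac hq hqfs hpfs hc hb hhc hhb hle).symm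

/-- (Non-prefix paths avoid the footprint.) Let `π = x.fs` and
`π' = y.gs` be paths with `π'` not a prefix of `π`, `π` acyclic and disconnected in
`(s, h)`, and the address of `π'` defined. Then the address of `π'` does not belong to
the domain of the footprint of `π`. -/
theorem nonprefix_not_in_footprint (s : Stack) (h : Heap) (x y : Var)
    (fs gs : List Fld) (hfs : fs ≠ []) (hgs : gs ≠ [])
    (hnp : ¬ (y = x ∧ gs <+: fs))
    (hac : Acyclic s h x fs) (hdisc : Disconnected s h x fs)
    (a' : Addr) (hdef : lval s h y gs = some a') :
    a' ∉ footDom s h x fs := by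
  clear hfs
  revert hgs hnp a'
  induction gs using List.reverseRecOn with
  | nil => intro hgs; exact absurd rfl hgs
  | append_singleton gs0 g ih =>
    intro _ hnp a' hdef
    rintro ⟨gs', hne, hpre, hlv⟩
    rcases eq_or_ne gs0 [] with rfl | hgs0
    · -- base case: gs = [g], so a' = (s y, g)
      have ha' : some (s y, g) = some a' := hdef
      cases ha'
      -- by disconnectedness, y = x
      have hyx : y = x := by
        by_contra hyx
        exact hdisc.2.1 y hyx ⟨(s y, g), ⟨gs', hne, hpre, hlv⟩, rfl⟩
      subst hyx
      obtain ⟨pre, g', rfl⟩ := gs'.eq_nil_or_concat.resolve_left hne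
      rw [List.concat_eq_append] at hpre hlv
      have hg' : g' = g := (lval_last_snd s h y pre g' _ hlv).symm
      subst g'
      rcases eq_or_ne pre [] with rfl | hpre0
      · exact hnp ⟨rfl, by simpa using hpre⟩
      · rw [lval_snoc s h y hpre0] at hlv
        obtain ⟨b, hb, hmap⟩ := Option.bind_eq_some_iff.mp hlv
        obtain ⟨ℓ, hℓ, heq⟩ := Option.map_eq_some_iff.mp hmap
        have hℓx : ℓ = s y := congrArg Prod.fst heq
        have hprefs : pre <+: fs := List.IsPrefix.trans ⟨[g], rfl⟩ hpre
        exact no_return s h y fs hac hpre0 hprefs hb (hℓx ▸ hℓ)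
    · -- inductive step: gs = gs0 ++ [g], gs0 ≠ []
      rw [lval_snoc s h y hgs0] at hdef
      obtain ⟨b, hb, hmap⟩ := Option.bind_eq_some_iff.mp hdef
      obtain ⟨ℓ, hℓ, ha'⟩ := Option.map_eq_some_iff.mp hmap
      cases ha'
      have hbmem : b ∈ footDom s h x fs :=
        hdisc.2.2 b ℓ hℓ ⟨(ℓ, g), ⟨gs', hne, hpre, hlv⟩, rfl⟩
      by_cases hcase : y = x ∧ gs0 <+: fs
      · obtain ⟨rfl, hgs0fs⟩ := hcase
        have hnfs : ¬ (gs0 ++ [g]) <+: fs := fun hh => hnp ⟨rfl, hh⟩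
        obtain ⟨pre, g', rfl⟩ := gs'.eq_nil_or_concat.resolve_left hne
        rw [List.concat_eq_append] at hpre hlv
        have hg' : g' = g := by
          have := lval_last_snd s h y pre g' _ hlv; simpa using this.symm
        subst g'
        rcases eq_or_ne pre [] with rfl | hpre0
        · have heq : some ((s y : Loc), g) = some (ℓ, g) := hlv
          have hℓx : ℓ = s y := (congrArg Prod.fst (Option.some.inj heq)).symm
          exact no_return s h y fs hac hgs0 hgs0fs hb (hℓx ▸ hℓ)
        · rw [lval_snoc s h y hpre0] at hlv
          obtain ⟨c, hc, hmapc⟩ := Option.bind_eq_some_iff.mp hlv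
          obtain ⟨ℓ', hℓ', heqc⟩ := Option.map_eq_some_iff.mp hmapc
          have hℓ'ℓ : ℓ' = ℓ := congrArg Prod.fst heqc
          have hprefs : pre <+: fs := List.IsPrefix.trans ⟨[g], rfl⟩ hpre
          have hpe : gs0 = pre :=
            acyclic_pred_inj s h y fs hac hgs0 hpre0 hgs0fs hprefs hb hc hℓ (hℓ'ℓ ▸ hℓ')
          exact hnfs (hpe ▸ hpre)
      · exact ih hgs0 hcase b hb hbmem
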